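/- arXiv:1401.5707 — 4 statements merged into one kernel-verified Lean document; each statement's English description precedes it below -/
import Mathlib

section
/- Fooling set lower bound for NFAs: Let L ⊆ Σ* be a language, and suppose there exist words x₁,...,x_t, y₁,...,y_t ∈ Σ* such that for all i, xᵢ·yᵢ ∈ L, and for all i ≠ j, xᵢ·yⱼ ∉ L. Then any nondeterministic finite automaton accepting exactly L has at least t states. -/
/-!
Assign to each index `i` a state reached on `x i` from which `y i` is accepted. If two indices
`i ≠ j` were assigned the same state, `x i ++ y j` would be accepted through it, so the
assignment is injective.
-/

namespace NFA

variable {α σ : Type*} (M : NFA α σ)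

theorem append_mem_accepts_iff {x y : List α} :
    x ++ y ∈ M.accepts ↔ ∃ q ∈ M.eval x, y ∈ M.acceptsFrom {q} := by
  simp only [mem_accepts, mem_acceptsFrom, evalFrom_append,
    mem_evalFrom_iff_exists (S := M.evalFrom M.start x), eval]
  exact ⟨fun ⟨s, hs, q, hq, h⟩ ↦ ⟨q, hq, s, hs, h⟩, fun ⟨q, hq, s, hs, h⟩ ↦ ⟨s, hs, q, hq, h⟩⟩

theorem exists_injective_of_fooling {ι : Type*} (x y : ι → List α)
    (hacc : ∀ i, x i ++ y i ∈ M.accepts)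
    (hrej : ∀ i j, i ≠ j → x i ++ y j ∉ M.accepts) :
    ∃ q : ι → σ, Function.Injective q := by
  choose q hq_eval hq_accepts using fun i ↦ M.append_mem_accepts_iff.mp (hacc i)
  refine ⟨q, fun i j hij ↦ by_contra fun hne ↦ hrej i j hne ?_⟩
  exact M.append_mem_accepts_iff.mpr ⟨q i, hq_eval i, hij ▸ hq_accepts j⟩

end NFA

/-- Fooling set lower bound for NFAs: if there are words `x i, y i` with
`x i ++ y i ∈ L(M)` and `x i ++ y j ∉ L(M)` for `i ≠ j`, then `M` has at
least `t` states. -/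
theorem nfa_fooling_set_lower_bound {α σ : Type*} [Fintype σ]
    (M : NFA α σ) (t : ℕ) (x y : Fin t → List α)
    (hacc : ∀ i, x i ++ y i ∈ M.accepts)
    (hrej : ∀ i j, i ≠ j → x i ++ y j ∉ M.accepts) :
    t ≤ Fintype.card σ := by
  obtain ⟨q, hq⟩ := M.exists_injective_of_fooling x y hacc hrej
  simpa using Fintype.card_le_of_injective q hq
end

section
/- Any NFA whose language equals L_k(n) = { w ∈ [n]^k : the k symbols of w are pairwise distinct } has at least 2^k states (for k ≤ n). -/
/-!
Fooling-set argument. For `S ⊆ [k]`, let `x_S` list the symbols of `S` and `y_S` those of its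
complement, both without repetition. Each `x_S ++ y_S` lies in `L_k(n)`, while `x_T ++ y_S` with
`T ≠ S` does not: it either has the wrong length or repeats a symbol of `T \ S`. Choosing for every
`S` a state through which an accepting run on `x_S ++ y_S` passes after reading `x_S` gives an
injection of the `2^k` subsets of `[k]` into the states.
-/

namespace NFA

variable {α σ : Type*} (M : NFA α σ)

theorem card_le_of_fooling_set {ι : Type*} [Fintype σ] [Fintype ι] (x y : ι → List α)
    (hdiag : ∀ i, x i ++ y i ∈ M.accepts) (hcross : ∀ i j, x i ++ y j ∈ M.accepts → i = j) :
    Fintype.card ι ≤ Fintype.card σ := by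
  choose q hqx hqy using fun i => (M.append_mem_accepts_iff).1 (hdiag i)
  refine Fintype.card_le_of_injective q fun i j hij => (hcross j i ?_).symm
  exact (M.append_mem_accepts_iff).2 ⟨q i, hij ▸ hqx j, hqy i⟩

end NFA

section SubsetWord

variable {α β : Type*} [Fintype β] [DecidableEq β] {e : β → α}

theorem nodup_map_toList_append_map_toList_compl (he : Function.Injective e) (S : Finset β) :
    (S.toList.map e ++ Sᶜ.toList.map e).Nodup := by
  rw [← List.map_append]
  refine (List.nodup_append.2 ⟨S.nodup_toList, Sᶜ.nodup_toList, ?_⟩).map he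
  intro a ha b hb hab
  subst hab
  exact Finset.mem_compl.1 (Finset.mem_toList.1 hb) (Finset.mem_toList.1 ha)

theorem eq_of_nodup_map_toList_append_map_toList_compl {S T : Finset β}
    (hlen : (T.toList.map e ++ Sᶜ.toList.map e).length = Fintype.card β)
    (hnd : (T.toList.map e ++ Sᶜ.toList.map e).Nodup) : T = S := by
  have hsub : T ⊆ S := by
    intro a haT
    by_contra haS
    refine List.disjoint_of_nodup_append hnd (List.mem_map_of_mem (Finset.mem_toList.2 haT))
      (List.mem_map_of_mem (Finset.mem_toList.2 (Finset.mem_compl.2 haS)))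
  have hcard : T.card + Sᶜ.card = S.card + Sᶜ.card := by
    simpa [S.card_add_card_compl] using hlen
  exact Finset.eq_of_subset_of_card_le hsub (Nat.add_right_cancel hcard).ge

end SubsetWord

theorem nfa_for_Lk_lower_bound_general {σ : Type*} [Fintype σ] (k n : ℕ)
    (hkn : k ≤ n) (M : NFA (Fin n) σ)
    (hL : M.accepts = {w : List (Fin n) | w.length = k ∧ w.Nodup}) :
    2 ^ k ≤ Fintype.card σ := by
  calc 2 ^ k = Fintype.card (Finset (Fin k)) := by simp
    _ ≤ Fintype.card σ := by
      refine M.card_le_of_fooling_set (fun S => S.toList.map (Fin.castLE hkn))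
        (fun S => Sᶜ.toList.map (Fin.castLE hkn)) (fun S => ?_) (fun T S hTS => ?_)
      · rw [hL]
        exact ⟨by simp [S.card_add_card_compl],
          nodup_map_toList_append_map_toList_compl (Fin.castLE_injective hkn) S⟩
      · rw [hL] at hTS
        exact eq_of_nodup_map_toList_append_map_toList_compl (by simpa using hTS.1) hTS.2

/-- Any NFA whose language is `L_k(n)`, the set of length-`k` words over `[n]`
with pairwise distinct symbols, has at least `2^k` states. -/
theorem nfa_for_Lk_lower_bound {σ : Type*} [Fintype σ] (k n : ℕ)
    (hk : 1 ≤ k) (hkn : k ≤ n) (M : NFA (Fin n) σ)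
    (hL : M.accepts = {w : List (Fin n) | w.length = k ∧ w.Nodup}) :
    2 ^ k ≤ Fintype.card σ :=
  nfa_for_Lk_lower_bound_general k n hkn M hL
end

section
/- The family of subsets S ↦ the word x_S formed by listing the elements of S in increasing order, paired with y_S = x_{complement of S}, forms a fooling set for L_k(k): for every S ⊆ [k], the concatenation x_S · y_S lies in L_k(k), and for every S ≠ T ⊆ [k], the concatenation x_S · y_T does not lie in L_k(k). -/
/-!
Concatenating the sorted lists of `s` and `tᶜ` gives a list without repetitions exactly when
`s` and `tᶜ` are disjoint, i.e. `s ⊆ t`, and it has length `#s + (|α| - #t)`, which is `|α|` exactly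
when `#s = #t`. Both hold when `s = t`; conversely `s ⊆ t` with `#s = #t` forces `s = t`.
-/

namespace Finset

variable {α : Type*}

theorem nodup_sort_append_sort_iff (r : α → α → Prop) [DecidableRel r] [IsTrans α r]
    [Std.Antisymm r] [Std.Total r] (s t : Finset α) :
    (s.sort r ++ t.sort r).Nodup ↔ Disjoint s t := by
  simp only [List.nodup_append, sort_nodup, true_and, mem_sort, disjoint_left]
  exact ⟨fun h a has hat => h a has a hat rfl, fun h a has b hbt hab => h has (hab ▸ hbt)⟩

variable [LinearOrder α] [Fintype α]

theorem nodup_sort_append_sort_compl_iff (s t : Finset α) :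
    (s.sort (· ≤ ·) ++ tᶜ.sort (· ≤ ·)).Nodup ↔ s ⊆ t := by
  rw [nodup_sort_append_sort_iff, disjoint_compl_right_iff]

theorem length_sort_append_sort_compl_eq_card_iff (s t : Finset α) :
    (s.sort (· ≤ ·) ++ tᶜ.sort (· ≤ ·)).length = Fintype.card α ↔ #s = #t := by
  have hs := card_le_univ s
  have ht := card_le_univ t
  rw [List.length_append, length_sort, length_sort, card_compl]
  omega

end Finset

open Finset in
theorem fooling_set_for_Lk_general (k : ℕ) :
    (∀ S : Finset (Fin k),
      (S.sort (· ≤ ·) ++ Sᶜ.sort (· ≤ ·)).length = k ∧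
      (S.sort (· ≤ ·) ++ Sᶜ.sort (· ≤ ·)).Nodup) ∧
    (∀ S T : Finset (Fin k), S ≠ T →
      ¬((S.sort (· ≤ ·) ++ Tᶜ.sort (· ≤ ·)).length = k ∧
        (S.sort (· ≤ ·) ++ Tᶜ.sort (· ≤ ·)).Nodup)) := by
  refine ⟨fun S => ⟨?_, ?_⟩, fun S T hST ⟨hlen, hnodup⟩ => ?_⟩
  · exact ((length_sort_append_sort_compl_eq_card_iff S S).2 rfl).trans (Fintype.card_fin k)
  · exact (nodup_sort_append_sort_compl_iff S S).2 subset_rfl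
  · have hcard := (length_sort_append_sort_compl_eq_card_iff S T).1
      (hlen.trans (Fintype.card_fin k).symm)
    exact hST (eq_of_subset_of_card_le ((nodup_sort_append_sort_compl_iff S T).1 hnodup) hcard.ge)

/-- The words `x_S` (elements of `S ⊆ [k]` in increasing order) together with
`y_S = x_{Sᶜ}` form a fooling set for `L_k(k)`. -/
theorem fooling_set_for_Lk (k : ℕ) (hk : 1 ≤ k) :
    (∀ S : Finset (Fin k),
      (S.sort (· ≤ ·) ++ Sᶜ.sort (· ≤ ·)).length = k ∧
      (S.sort (· ≤ ·) ++ Sᶜ.sort (· ≤ ·)).Nodup) ∧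
    (∀ S T : Finset (Fin k), S ≠ T →
      ¬((S.sort (· ≤ ·) ++ Tᶜ.sort (· ≤ ·)).length = k ∧
        (S.sort (· ≤ ·) ++ Tᶜ.sort (· ≤ ·)).Nodup)) :=
  fooling_set_for_Lk_general k
end

section
/- Universal sets split distinctness: Let U be an (n,k)-universal family of subsets of [n]. Then a word w ∈ [n]^k has pairwise distinct symbols if and only if there exists T ∈ U such that the first ⌈k/2⌉ symbols of w are pairwise distinct and lie in T, the last ⌊k/2⌋ symbols of w are pairwise distinct and lie in the complement of T. -/
/-! Given `w` injective, apply universality to its image `S` (of size `k`) and to the image `S'` of the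
first half; the resulting `T` separates the two halves of `w`. Conversely, the two halves are injective
on their own and cannot share a symbol, since one half lands in `T` and the other in `Tᶜ`. -/

open Function Set

def Finset.IsUniversal {α : Type*} [DecidableEq α] (k : ℕ) (U : Set (Finset α)) : Prop :=
  ∀ S : Finset α, S.card = k → ∀ S' ⊆ S, ∃ T ∈ U, T ∩ S = S'

theorem Finset.IsUniversal.exists_preimage_eq {α ι : Type*} [DecidableEq α] [Fintype ι]
    {U : Set (Finset α)} (hU : Finset.IsUniversal (Fintype.card ι) U) {w : ι → α}
    (hw : Injective w) (s : Set ι) : ∃ T ∈ U, w ⁻¹' T = s := by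
  classical
  obtain ⟨T, hTU, hT⟩ := hU (Finset.univ.image w) (Finset.card_image_of_injective _ hw)
    ((Finset.univ.filter (· ∈ s)).image w) (Finset.image_subset_image (Finset.subset_univ _))
  refine ⟨T, hTU, Set.ext fun i => ?_⟩
  simpa [hw.eq_iff] using congrArg (w i ∈ ·) hT

theorem Function.injective_of_injOn_of_injOn_compl {α β : Type*} {f : α → β} {s : Set α}
    {t : Set β} (hs : InjOn f s) (hsc : InjOn f sᶜ) (hst : MapsTo f s t) (hsct : MapsTo f sᶜ tᶜ) :
    Injective f := by
  rw [← injOn_univ, ← union_compl_self s, injOn_union disjoint_compl_right]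
  exact ⟨hs, hsc, fun x hx y hy hxy => hsct hy (hxy ▸ hst hx)⟩

theorem universal_splits_distinctness_general (k n : ℕ)
    (U : Set (Finset (Fin n)))
    (hU : ∀ S : Finset (Fin n), S.card = k → ∀ S' ⊆ S, ∃ T ∈ U, T ∩ S = S')
    (w : Fin k → Fin n) :
    Function.Injective w ↔
      ∃ T ∈ U,
        Set.InjOn w {c : Fin k | (c : ℕ) < (k + 1) / 2} ∧
        (∀ c : Fin k, (c : ℕ) < (k + 1) / 2 → w c ∈ T) ∧
        Set.InjOn w {c : Fin k | (k + 1) / 2 ≤ (c : ℕ)} ∧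
        (∀ c : Fin k, (k + 1) / 2 ≤ (c : ℕ) → w c ∉ T) := by
  have hfirst_compl :
      {c : Fin k | (c : ℕ) < (k + 1) / 2}ᶜ = {c : Fin k | (k + 1) / 2 ≤ (c : ℕ)} := by
    ext c; simp
  constructor
  · intro hw
    have hU' : Finset.IsUniversal (Fintype.card (Fin k)) U := by rwa [Fintype.card_fin]
    obtain ⟨T, hTU, hT⟩ := hU'.exists_preimage_eq hw {c | (c : ℕ) < (k + 1) / 2}
    refine ⟨T, hTU, hw.injOn, fun c hc => ?_, hw.injOn, fun c hc hcT => ?_⟩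
    · exact (hT.symm ▸ hc : c ∈ w ⁻¹' T)
    · exact (not_lt.mpr hc) (hT ▸ hcT : c ∈ {c : Fin k | (c : ℕ) < (k + 1) / 2})
  · rintro ⟨T, -, hinj_first, hmem_first, hinj_last, hmem_last⟩
    exact injective_of_injOn_of_injOn_compl (t := (T : Set (Fin n))) hinj_first
      (hfirst_compl ▸ hinj_last) hmem_first (hfirst_compl ▸ hmem_last)

/-- Universal sets split distinctness: given an `(n,k)`-universal family `U`,
a word `w ∈ [n]^k` has pairwise distinct symbols iff there is `T ∈ U` such that
the first `⌈k/2⌉` symbols of `w` are distinct and lie in `T` while the last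
`⌊k/2⌋` symbols are distinct and lie in `Tᶜ`. -/
theorem universal_splits_distinctness (k n : ℕ) (hk : 1 ≤ k) (hkn : k ≤ n)
    (U : Set (Finset (Fin n)))
    (hU : ∀ S : Finset (Fin n), S.card = k → ∀ S' ⊆ S, ∃ T ∈ U, T ∩ S = S')
    (w : Fin k → Fin n) :
    Function.Injective w ↔
      ∃ T ∈ U,
        Set.InjOn w {c : Fin k | (c : ℕ) < (k + 1) / 2} ∧
        (∀ c : Fin k, (c : ℕ) < (k + 1) / 2 → w c ∈ T) ∧
        Set.InjOn w {c : Fin k | (k + 1) / 2 ≤ (c : ℕ)} ∧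
        (∀ c : Fin k, (k + 1) / 2 ≤ (c : ℕ) → w c ∉ T) :=
  universal_splits_distinctness_general k n U hU w
end
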